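/- Among all augmentation functions m, the conditional variance Var(τ_m | X = x) of the pseudo-outcome τ_m = A(Y - m(X))/π_A(X) is minimized pointwise by the counterfactual mean outcome m*(x) = π_{-1}(x)μ_1(x) + π_1(x)μ_{-1}(x), where μ_a(x) = E[Y | X = x, A = a]. -/

import Mathlib

/-! With the weight `w = A / π_A` the pseudo-outcome is `τ_m = w (Y - m)`, hence
`τ_m = τ_{m*} + (m* - m) w`. Splitting integrals over the two arms gives `E[w] = 0` and
`Cov(τ_c, w) = E[w² (Y - c)] = (m* - c) / (π_1 π_{-1})`, so `τ_{m*}` is uncorrelated with `w` and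
`Var(τ_m) = Var(τ_{m*}) + (m* - m)² Var(w)`. -/

open MeasureTheory ProbabilityTheory

lemma variance_le_variance_add_of_covariance_eq_zero {Ω : Type*} [MeasurableSpace Ω]
    {μ : Measure Ω} [IsFiniteMeasure μ] {X Z : Ω → ℝ}
    (hX : MemLp X 2 μ) (hZ : MemLp Z 2 μ) (h : cov[X, Z; μ] = 0) :
    Var[X; μ] ≤ Var[X + Z; μ] := by
  rw [variance_add hX hZ, h]
  linarith [variance_nonneg Z μ]

section TwoArms

variable {Ω : Type*} {A : Ω → ℝ} {p : ℝ}

noncomputable def invPropensityWeight (A : Ω → ℝ) (p : ℝ) (ω : Ω) : ℝ :=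
  A ω / if A ω = 1 then p else 1 - p

lemma invPropensityWeight_of_eq_one {ω : Ω} (h : A ω = 1) : invPropensityWeight A p ω = p⁻¹ := by
  simp [invPropensityWeight, h]

lemma invPropensityWeight_of_eq_neg_one {ω : Ω} (h : A ω = -1) :
    invPropensityWeight A p ω = -(1 - p)⁻¹ := by
  norm_num [invPropensityWeight, h, neg_div]

lemma compl_setOf_eq_one (hAval : ∀ ω, A ω = 1 ∨ A ω = -1) :
    {ω | A ω = 1}ᶜ = {ω | A ω = -1} := by
  ext ω
  rcases hAval ω with h | h <;> norm_num [h]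

variable [MeasurableSpace Ω] {μ : Measure Ω}

lemma measurable_invPropensityWeight (hA : Measurable A) :
    Measurable (invPropensityWeight A p) :=
  hA.div (Measurable.ite (hA (measurableSet_singleton 1)) measurable_const measurable_const)

lemma memLp_invPropensityWeight [IsFiniteMeasure μ] (hA : Measurable A)
    (hAval : ∀ ω, A ω = 1 ∨ A ω = -1) (q : ENNReal) : MemLp (invPropensityWeight A p) q μ := by
  refine .of_bound (measurable_invPropensityWeight hA).aestronglyMeasurable (|p⁻¹| + |(1 - p)⁻¹|)
    (.of_forall fun ω => ?_)
  rcases hAval ω with h | h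
  · rw [invPropensityWeight_of_eq_one h, Real.norm_eq_abs]
    linarith [abs_nonneg (1 - p)⁻¹]
  · rw [invPropensityWeight_of_eq_neg_one h, Real.norm_eq_abs, abs_neg]
    linarith [abs_nonneg p⁻¹]

lemma integral_eq_setIntegral_eq_one_add_eq_neg_one (hA : Measurable A)
    (hAval : ∀ ω, A ω = 1 ∨ A ω = -1) {f : Ω → ℝ} (hf : Integrable f μ) :
    ∫ ω, f ω ∂μ = ∫ ω in {ω | A ω = 1}, f ω ∂μ + ∫ ω in {ω | A ω = -1}, f ω ∂μ := by
  rw [← compl_setOf_eq_one hAval, integral_add_compl (measurableSet_eq_fun hA measurable_const) hf]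

lemma measureReal_eq_neg_one [IsProbabilityMeasure μ] (hA : Measurable A)
    (hAval : ∀ ω, A ω = 1 ∨ A ω = -1) (hp : μ.real {ω | A ω = 1} = p) :
    μ.real {ω | A ω = -1} = 1 - p := by
  rw [← compl_setOf_eq_one hAval,
    probReal_compl_eq_one_sub (measurableSet_eq_fun hA measurable_const), hp]

lemma memLp_invPropensityWeight_mul [IsFiniteMeasure μ] (hA : Measurable A)
    (hAval : ∀ ω, A ω = 1 ∨ A ω = -1) {q : ENNReal} {f : Ω → ℝ} (hf : MemLp f q μ) :
    MemLp (fun ω => invPropensityWeight A p ω * f ω) q μ :=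
  hf.mul' (memLp_invPropensityWeight hA hAval ⊤)

lemma integral_invPropensityWeight [IsProbabilityMeasure μ] (hA : Measurable A)
    (hAval : ∀ ω, A ω = 1 ∨ A ω = -1) (hp : μ.real {ω | A ω = 1} = p) (hp0 : p ≠ 0)
    (hp1 : 1 - p ≠ 0) :
    ∫ ω, invPropensityWeight A p ω ∂μ = 0 := by
  rw [integral_eq_setIntegral_eq_one_add_eq_neg_one hA hAval
      ((memLp_invPropensityWeight hA hAval 1).integrable le_rfl),
    setIntegral_congr_fun (measurableSet_eq_fun hA measurable_const)
      fun ω h => invPropensityWeight_of_eq_one h,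
    setIntegral_congr_fun (measurableSet_eq_fun hA measurable_const)
      fun ω h => invPropensityWeight_of_eq_neg_one h,
    setIntegral_const, setIntegral_const, hp, measureReal_eq_neg_one hA hAval hp, smul_eq_mul,
    smul_eq_mul, mul_inv_cancel₀ hp0, mul_neg, mul_inv_cancel₀ hp1, add_neg_cancel]

lemma integral_invPropensityWeight_sq_mul [IsFiniteMeasure μ] (hA : Measurable A)
    (hAval : ∀ ω, A ω = 1 ∨ A ω = -1) {f : Ω → ℝ} (hf : Integrable f μ) :
    ∫ ω, invPropensityWeight A p ω ^ 2 * f ω ∂μ =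
      (p ^ 2)⁻¹ * ∫ ω in {ω | A ω = 1}, f ω ∂μ
        + ((1 - p) ^ 2)⁻¹ * ∫ ω in {ω | A ω = -1}, f ω ∂μ := by
  have hint : Integrable (fun ω => invPropensityWeight A p ω ^ 2 * f ω) μ := by
    simpa only [← mul_assoc, ← sq, memLp_one_iff_integrable] using
      memLp_invPropensityWeight_mul (p := p) hA hAval
        (memLp_invPropensityWeight_mul (p := p) hA hAval (memLp_one_iff_integrable.2 hf))
  rw [integral_eq_setIntegral_eq_one_add_eq_neg_one hA hAval hint,
    setIntegral_congr_fun (measurableSet_eq_fun hA measurable_const)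
      fun ω h => by rw [invPropensityWeight_of_eq_one h, inv_pow],
    setIntegral_congr_fun (s := {ω | A ω = -1}) (measurableSet_eq_fun hA measurable_const)
      fun ω h => by rw [invPropensityWeight_of_eq_neg_one h, neg_sq, inv_pow],
    integral_const_mul, integral_const_mul]

lemma covariance_invPropensityWeight_mul_sub [IsProbabilityMeasure μ] (hA : Measurable A)
    (hAval : ∀ ω, A ω = 1 ∨ A ω = -1) (hp : μ.real {ω | A ω = 1} = p) (hp0 : p ≠ 0)
    (hp1 : 1 - p ≠ 0) {Y : Ω → ℝ} (hY : MemLp Y 2 μ) {μ1 μm1 : ℝ}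
    (hμ1 : ∫ ω in {ω | A ω = 1}, Y ω ∂μ = p * μ1)
    (hμm1 : ∫ ω in {ω | A ω = -1}, Y ω ∂μ = (1 - p) * μm1) (c : ℝ) :
    cov[fun ω => invPropensityWeight A p ω * (Y ω - c), invPropensityWeight A p; μ] =
      ((1 - p) * μ1 + p * μm1 - c) / (p * (1 - p)) := by
  have hYc : Integrable (fun ω => Y ω - c) μ := (hY.integrable one_le_two).sub (integrable_const c)
  have hsetIntegral : ∀ s, ∫ ω in s, (Y ω - c) ∂μ = ∫ ω in s, Y ω ∂μ - μ.real s * c := fun s => by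
    rw [integral_sub (hY.integrable one_le_two).integrableOn (integrable_const c), setIntegral_const,
      smul_eq_mul]
  have hτc : MemLp (fun ω => invPropensityWeight A p ω * (Y ω - c)) 2 μ :=
    memLp_invPropensityWeight_mul hA hAval (hY.sub (memLp_const c))
  rw [covariance_eq_sub hτc (memLp_invPropensityWeight hA hAval 2),
    integral_invPropensityWeight hA hAval hp hp0 hp1, mul_zero, sub_zero]
  simp only [Pi.mul_apply, mul_right_comm _ _ (invPropensityWeight A p _), ← sq]
  rw [integral_invPropensityWeight_sq_mul hA hAval hYc, hsetIntegral, hsetIntegral, hμ1, hμm1, hp,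
    measureReal_eq_neg_one hA hAval hp]
  field_simp
  ring

end TwoArms

/-- The counterfactual mean outcome minimizes the conditional variance of the
pseudo-outcome.  We work on a probability space representing the conditional law given `X = x`:
`A ∈ {-1,1}` with `μ {A = 1} = π1 ∈ (0,1)`, `Y` square-integrable with arm-wise conditional
means `μ1, μm1`.  For `m ∈ ℝ` let `τ_m = A (Y - m) / π_A`.  Then
`Var(τ_{m*}) ≤ Var(τ_m)` for every `m`, where `m* = (1 - π1) μ1 + π1 μm1`. -/
theorem cmo_minimizes_conditional_variance
    {Ω : Type*} [MeasurableSpace Ω] (μ : Measure Ω) [IsProbabilityMeasure μ]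
    (A : Ω → ℝ) (hA : Measurable A) (hAval : ∀ ω, A ω = 1 ∨ A ω = -1)
    (Y : Ω → ℝ) (hY : MemLp Y 2 μ)
    (π1 : ℝ) (hπ1 : (μ {ω | A ω = 1}).toReal = π1) (hπ1pos : 0 < π1) (hπ1lt : π1 < 1)
    (μ1 μm1 : ℝ)
    (hμ1 : ∫ ω in {ω | A ω = 1}, Y ω ∂μ = π1 * μ1)
    (hμm1 : ∫ ω in {ω | A ω = -1}, Y ω ∂μ = (1 - π1) * μm1)
    (τ : ℝ → Ω → ℝ)
    (hτ : ∀ (m : ℝ) (ω : Ω),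
      τ m ω = A ω * (Y ω - m) / (if A ω = 1 then π1 else 1 - π1))
    (Var : ℝ → ℝ)
    (hVar : ∀ m : ℝ, Var m = ∫ ω, (τ m ω)^2 ∂μ - (∫ ω, τ m ω ∂μ)^2)
    (mstar : ℝ) (hmstar : mstar = (1 - π1) * μ1 + π1 * μm1) :
    ∀ m : ℝ, Var mstar ≤ Var m := by
  intro m
  set w := invPropensityWeight A π1
  have hτw : ∀ c, τ c = fun ω => w ω * (Y ω - c) := fun c => funext fun ω => by
    rw [hτ, ← div_mul_eq_mul_div]
    rfl
  have hτmem : ∀ c, MemLp (τ c) 2 μ := fun c => by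
    rw [hτw]
    exact memLp_invPropensityWeight_mul hA hAval (hY.sub (memLp_const c))
  have hVar_eq : ∀ c, Var c = Var[τ c; μ] := fun c => by
    rw [hVar, variance_eq_sub (hτmem c)]
    rfl
  have hshift : τ m = τ mstar + (mstar - m) • w := by
    ext ω
    simp only [hτw, Pi.add_apply, Pi.smul_apply, smul_eq_mul]
    ring
  have hcov : cov[τ mstar, (mstar - m) • w; μ] = 0 := by
    rw [covariance_smul_right, hτw, covariance_invPropensityWeight_mul_sub hA hAval hπ1
      hπ1pos.ne' (sub_pos.2 hπ1lt).ne' hY hμ1 hμm1, hmstar, sub_self, zero_div, mul_zero]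
  rw [hVar_eq, hVar_eq, hshift]
  exact variance_le_variance_add_of_covariance_eq_zero (hτmem mstar)
    ((memLp_invPropensityWeight hA hAval 2).const_smul _) hcov
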